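/- arXiv:2511.02579 — 4 statements merged into one kernel-verified Lean document; each statement's English description precedes it below -/
import Mathlib

section
/- Let F : (0,∞) → (0,∞) be a positive function and let δ > 0 satisfy δ ≤ min{F(1)^(−3/2), 2^(−3/2)}. If F(4^(−m−1)) ≤ 1 + δ·(F(4^(−m)))^(3/2) for all natural numbers m, then sup over m ∈ ℕ of F(4^(−m)) is at most max{2, δ^(−2/3)}. -/
/-! Since `δ ≤ 2^(-3/2)`, `M := δ^(-2/3)` is at least `2`, so it is the bound claimed, and
`δ ≤ F(1)^(-3/2)` says `F(1) ≤ M`. Moreover `1 + δ M^(3/2) = 2 ≤ M`, and `x ↦ 1 + δ x^(3/2)` is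
monotone on `[0, ∞)`, so by induction every `F(4^(-m))` stays below `M`. -/

open Real

lemma le_rpow_neg_two_thirds_iff {x δ : ℝ} (hx : 0 < x) (hδ : 0 < δ) :
    x ≤ δ ^ (-(2:ℝ)/3) ↔ δ ≤ x ^ (-(3:ℝ)/2) := by
  have h := le_rpow_inv_iff_of_neg hx hδ (show -(3:ℝ)/2 < 0 by norm_num)
  rwa [show (-(3:ℝ)/2)⁻¹ = -(2:ℝ)/3 by norm_num] at h

lemma mul_rpow_neg_two_thirds_rpow_three_halves {δ : ℝ} (hδ : 0 < δ) :
    δ * (δ ^ (-(2:ℝ)/3)) ^ ((3:ℝ)/2) = 1 := by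
  rw [← rpow_mul hδ.le, show -(2:ℝ)/3 * (3/2) = -1 by norm_num, rpow_neg_one,
    mul_inv_cancel₀ hδ.ne']

lemma MonotoneOn.seq_le_of_map_le {α : Type*} [Preorder α] {a : ℕ → α} {g : α → α}
    {s : Set α} {M : α} (hg : MonotoneOn g s) (ha : ∀ n, a n ∈ s) (hM : M ∈ s)
    (hrec : ∀ n, a (n + 1) ≤ g (a n)) (h0 : a 0 ≤ M) (hgM : g M ≤ M) : ∀ n, a n ≤ M
  | 0 => h0
  | n + 1 => (hrec n).trans <|
      (hg (ha n) hM (hg.seq_le_of_map_le ha hM hrec h0 hgM n)).trans hgM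

lemma monotoneOn_one_add_mul_rpow {δ p : ℝ} (hδ : 0 ≤ δ) (hp : 0 ≤ p) :
    MonotoneOn (fun x : ℝ => 1 + δ * x ^ p) (Set.Ici 0) := fun _ hx _ _ hxy => by
  dsimp only
  gcongr

/-- Iteration lemma: recurrence `F(4^(-m-1)) ≤ 1 + δ F(4^(-m))^(3/2)` with small `δ`
implies a uniform bound `max 2 (δ^(-2/3))` on `F(4^(-m))` for all `m ∈ ℕ`. -/
theorem stmt_0 (F : ℝ → ℝ) (hF : ∀ r : ℝ, 0 < r → 0 < F r)
    (δ : ℝ) (hδ : 0 < δ)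
    (hδle : δ ≤ min ((F 1) ^ (-(3:ℝ)/2)) ((2:ℝ) ^ (-(3:ℝ)/2)))
    (hrec : ∀ m : ℕ, F ((4:ℝ) ^ (-(m:ℝ) - 1)) ≤ 1 + δ * (F ((4:ℝ) ^ (-(m:ℝ)))) ^ ((3:ℝ)/2)) :
    ∀ m : ℕ, F ((4:ℝ) ^ (-(m:ℝ))) ≤ max 2 (δ ^ (-(2:ℝ)/3)) := by
  have h2M : (2:ℝ) ≤ δ ^ (-(2:ℝ)/3) :=
    (le_rpow_neg_two_thirds_iff two_pos hδ).2 (hδle.trans (min_le_right _ _))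
  rw [max_eq_right h2M]
  refine (monotoneOn_one_add_mul_rpow (p := 3 / 2) hδ.le (by norm_num)).seq_le_of_map_le
    (a := fun m : ℕ => F ((4:ℝ) ^ (-(m:ℝ)))) (fun m => (hF _ (by positivity)).le)
    (show (0:ℝ) ≤ δ ^ (-(2:ℝ)/3) by linarith) (fun m => ?_) ?_ ?_
  · simpa only [Nat.cast_succ, neg_add'] using hrec m
  · simpa using (le_rpow_neg_two_thirds_iff (hF 1 one_pos) hδ).2 (hδle.trans (min_le_left _ _))
  · rw [mul_rpow_neg_two_thirds_rpow_three_halves hδ]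
    linarith
end

section
/- Fix b > 0, let F : (0,∞) → (0,∞) be positive, and let δ > 0 satisfy δ ≤ min{ b / (F(1))^(3/2), 1/(2·√(2b)) }. If F(4^(−m−1)) ≤ b + δ·(F(4^(−m)))^(3/2) for all m ∈ ℕ, then sup over m ∈ ℕ of F(4^(−m)) is at most max{ 2b, (b/δ)^(2/3) }. -/
/-! An upper bound `M` with `b + δ M^{3/2} ≤ M` is preserved by the recursion, since
`t ↦ b + δ t^{3/2}` is monotone; `M = max (2b) ((b/δ)^{2/3})` is such a bound because the
smallness of `δ` makes `δ M^{3/2} ≤ M / 2` and `b ≤ M / 2`, and the bound on `δ` in terms of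
`F 1` starts the induction. -/

open Real

lemma le_of_succ_le_apply_of_monotoneOn {α : Type*} [Preorder α] {s : Set α} {f : α → α}
    {x : ℕ → α} {M : α} (hf : MonotoneOn f s) (hx : ∀ n, x n ∈ s) (hM : M ∈ s)
    (hfM : f M ≤ M) (h0 : x 0 ≤ M) (hstep : ∀ n, x (n + 1) ≤ f (x n)) : ∀ n, x n ≤ M
  | 0 => h0
  | n + 1 => (hstep n).trans <|
      (hf (hx n) hM (le_of_succ_le_apply_of_monotoneOn hf hx hM hfM h0 hstep n)).trans hfM

lemma mul_two_mul_rpow_three_halves_le {b δ : ℝ} (hb : 0 < b)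
    (hδle : δ ≤ 1 / (2 * √(2 * b))) : δ * (2 * b) ^ ((3 : ℝ) / 2) ≤ b := by
  have hsqrt : 0 < √(2 * b) := sqrt_pos.mpr (by positivity)
  have hpow : (2 * b) ^ ((3 : ℝ) / 2) = 2 * b * √(2 * b) := by
    rw [show (3 : ℝ) / 2 = 1 + 1 / 2 by norm_num, rpow_add (by positivity), rpow_one,
      sqrt_eq_rpow]
  calc δ * (2 * b) ^ ((3 : ℝ) / 2)
      ≤ 1 / (2 * √(2 * b)) * (2 * b * √(2 * b)) := by
        rw [hpow]; exact mul_le_mul_of_nonneg_right hδle (by positivity)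
    _ = b := by field_simp

lemma add_mul_rpow_three_halves_le_max {b δ : ℝ} (hb : 0 < b) (hδ : 0 < δ)
    (hδle : δ ≤ 1 / (2 * √(2 * b))) :
    b + δ * max (2 * b) ((b / δ) ^ ((2 : ℝ) / 3)) ^ ((3 : ℝ) / 2)
      ≤ max (2 * b) ((b / δ) ^ ((2 : ℝ) / 3)) := by
  rcases le_total ((b / δ) ^ ((2 : ℝ) / 3)) (2 * b) with h | h
  · rw [max_eq_left h]
    linarith [mul_two_mul_rpow_three_halves_le hb hδle]
  · have hpow : ((b / δ) ^ ((2 : ℝ) / 3)) ^ ((3 : ℝ) / 2) = b / δ := by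
      rw [← rpow_mul (by positivity)]; norm_num
    rw [max_eq_right h, hpow, mul_div_cancel₀ b hδ.ne']
    linarith

lemma le_rpow_two_thirds_of_le_div_rpow {x b δ : ℝ} (hx : 0 < x) (hδ : 0 < δ)
    (h : δ ≤ b / x ^ ((3 : ℝ) / 2)) : x ≤ (b / δ) ^ ((2 : ℝ) / 3) := by
  rw [le_div_iff₀ (rpow_pos_of_pos hx _)] at h
  have hb : 0 ≤ b := h.trans' (by positivity)
  rw [show (2 : ℝ) / 3 = ((3 : ℝ) / 2)⁻¹ by norm_num,
    le_rpow_inv_iff_of_pos hx.le (div_nonneg hb hδ.le) (by norm_num), le_div_iff₀ hδ]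
  linarith

/-- Rescaled iteration lemma with constant `b`. -/
theorem stmt_1 (b : ℝ) (hb : 0 < b) (F : ℝ → ℝ) (hF : ∀ r : ℝ, 0 < r → 0 < F r)
    (δ : ℝ) (hδ : 0 < δ)
    (hδle : δ ≤ min (b / (F 1) ^ ((3:ℝ)/2)) (1 / (2 * Real.sqrt (2 * b))))
    (hrec : ∀ m : ℕ, F ((4:ℝ) ^ (-(m:ℝ) - 1)) ≤ b + δ * (F ((4:ℝ) ^ (-(m:ℝ)))) ^ ((3:ℝ)/2)) :
    ∀ m : ℕ, F ((4:ℝ) ^ (-(m:ℝ))) ≤ max (2 * b) ((b / δ) ^ ((2:ℝ)/3)) := by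
  have hF1 : F 1 ≤ (b / δ) ^ ((2 : ℝ) / 3) :=
    le_rpow_two_thirds_of_le_div_rpow (hF 1 one_pos) hδ (hδle.trans (min_le_left _ _))
  refine le_of_succ_le_apply_of_monotoneOn (s := Set.Ici 0)
    (f := fun t => b + δ * t ^ ((3 : ℝ) / 2)) ?_ ?_ ?_
    (add_mul_rpow_three_halves_le_max hb hδ (hδle.trans (min_le_right _ _))) ?_ ?_
  · intro u hu v _ huv
    simp only
    gcongr
  · exact fun n => (hF _ (rpow_pos_of_pos (by norm_num) _)).le
  · exact Set.mem_Ici.mpr (by positivity)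
  · simpa using le_max_of_le_right hF1
  · intro n
    simpa [sub_eq_add_neg, add_comm] using hrec n
end

section
/- Let F : (0,∞) → (0,∞), δ > 0, m ∈ ℕ, and suppose F(4^(−k−1)) ≤ 1 + δ·(F(4^(−k)))^(3/2) for all k ∈ ℕ, and moreover δ·(F(4^(−k)))^(3/2) ≥ 1 for all integers k with m−ℓ ≤ k ≤ m−1, where 1 ≤ ℓ ≤ m. Then F(4^(−m)) ≤ 1 + (1/2)·(2δ)^(S(ℓ))·(F(4^(ℓ−m)))^((3/2)^ℓ), where S(ℓ) = Σ_{j=0}^{ℓ−1} (3/2)^j. -/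
/-! Wherever `δ a k ^ p ≥ 1`, the recurrence `a (k+1) ≤ 1 + δ a k ^ p` self-improves to
`a (k+1) ≤ 2δ a k ^ p`. Raising this to the power `p ^ ℓ` and iterating from the bottom scale
upwards multiplies the constant by `(2δ) ^ (p ^ ℓ)` at each step, which produces the geometric sum
`∑_{j<ℓ} p ^ j` in the exponent of `2δ`. -/

open Real Finset

theorem rpow_le_mul_rpow_of_le_mul_rpow {x y c p q : ℝ} (hx : 0 ≤ x) (hy : 0 ≤ y) (hc : 0 ≤ c)
    (hq : 0 ≤ q) (h : x ≤ c * y ^ p) : x ^ q ≤ c ^ q * y ^ (p * q) :=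
  calc x ^ q ≤ (c * y ^ p) ^ q := rpow_le_rpow hx h hq
    _ = c ^ q * y ^ (p * q) := by rw [mul_rpow hc (rpow_nonneg hy _), ← rpow_mul hy]

theorem le_one_add_rpow_geom_sum_of_recurrence {a : ℕ → ℝ} (ha : ∀ k, 0 ≤ a k) {δ p : ℝ}
    (hδ : 0 < δ) (hp : 0 ≤ p) (hrec : ∀ k, a (k + 1) ≤ 1 + δ * a k ^ p) {n ℓ : ℕ} (hℓ : 1 ≤ ℓ)
    (hlow : ∀ k, n ≤ k → k < n + ℓ → 1 ≤ δ * a k ^ p) :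
    a (n + ℓ) ≤ 1 + (1 / 2) * (2 * δ) ^ (∑ j ∈ range ℓ, p ^ j) * a n ^ (p ^ ℓ) := by
  induction ℓ, hℓ using Nat.le_induction generalizing n with
  | base => simpa [mul_assoc] using hrec n
  | succ ℓ hℓ ih =>
    have ih' := ih (n := n + 1) fun k hk hk' => hlow k (by omega) (by omega)
    have hstep : a (n + 1) ≤ 2 * δ * a n ^ p := by linarith [hrec n, hlow n le_rfl (by omega)]
    have hpow : a (n + 1) ^ p ^ ℓ ≤ (2 * δ) ^ p ^ ℓ * a n ^ (p * p ^ ℓ) :=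
      rpow_le_mul_rpow_of_le_mul_rpow (ha _) (ha _) (by positivity) (by positivity) hstep
    have hcoef : 0 ≤ (1 / 2) * (2 * δ) ^ (∑ j ∈ range ℓ, p ^ j) := by positivity
    calc a (n + (ℓ + 1)) = a (n + 1 + ℓ) := by rw [add_comm ℓ, add_assoc]
      _ ≤ 1 + (1 / 2) * (2 * δ) ^ (∑ j ∈ range ℓ, p ^ j) * a (n + 1) ^ p ^ ℓ := ih'
      _ ≤ 1 + (1 / 2) * (2 * δ) ^ (∑ j ∈ range ℓ, p ^ j) *
            ((2 * δ) ^ p ^ ℓ * a n ^ (p * p ^ ℓ)) := by gcongr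
      _ = 1 + (1 / 2) * (2 * δ) ^ (∑ j ∈ range (ℓ + 1), p ^ j) * a n ^ (p ^ (ℓ + 1)) := by
        rw [sum_range_succ, rpow_add (by positivity), pow_succ']
        ring

/-- Inductive claim in the iteration lemma: the recurrence plus the lower bound
`δ F^(3/2) ≥ 1` on the range of scales `m-ℓ ≤ k ≤ m-1` gives the iterated bound. -/
theorem stmt_3 (F : ℝ → ℝ) (hF : ∀ r : ℝ, 0 < r → 0 < F r)
    (δ : ℝ) (hδ : 0 < δ) (m ℓ : ℕ) (hℓ1 : 1 ≤ ℓ) (hℓm : ℓ ≤ m)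
    (hrec : ∀ k : ℕ, F ((4:ℝ) ^ (-(k:ℝ) - 1)) ≤ 1 + δ * (F ((4:ℝ) ^ (-(k:ℝ)))) ^ ((3:ℝ)/2))
    (hlow : ∀ k : ℕ, m - ℓ ≤ k → k ≤ m - 1 → 1 ≤ δ * (F ((4:ℝ) ^ (-(k:ℝ)))) ^ ((3:ℝ)/2)) :
    F ((4:ℝ) ^ (-(m:ℝ))) ≤
      1 + (1/2) * (2 * δ) ^ (∑ j ∈ Finset.range ℓ, ((3:ℝ)/2) ^ j) *
        (F ((4:ℝ) ^ ((ℓ:ℝ) - m))) ^ (((3:ℝ)/2) ^ ℓ) := by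
  set a : ℕ → ℝ := fun k => F ((4:ℝ) ^ (-(k:ℝ))) with ha
  have hrec' : ∀ k, a (k + 1) ≤ 1 + δ * a k ^ ((3:ℝ)/2) := fun k => by
    simpa only [ha, Nat.cast_succ, neg_add'] using hrec k
  have hbound := le_one_add_rpow_geom_sum_of_recurrence (fun k => (hF _ (by positivity)).le)
    hδ (by norm_num) hrec' hℓ1 (n := m - ℓ) fun k hk hk' => hlow k hk (by omega)
  rw [Nat.sub_add_cancel hℓm] at hbound
  simpa only [ha, Nat.cast_sub hℓm, neg_sub] using hbound
end

section
/- Let v be a smooth tangent vector field on the sphere S^(N−1), and let f, p : S^(N−1) → ℝ be smooth, satisfying the tangential Euler equation (v·∇_S)v + ∇_S p = 0 and the normal equation v·∇_S f = H, where H := |v|² + f² + 2p. Then v·∇_S H = 2 f H pointwise on S^(N−1). -/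
open Metric
open scoped RealInnerProductSpace

/-- Bernoulli identity `v·∇_S H = 2fH` for homogeneous Euler solutions on the sphere.
Functions on `S^(N-1)` are encoded via their `0`-homogeneous extensions to `ℝ^N \ {0}`:
for such an extension `g`, the spherical gradient `∇_S g(σ)` is `gradient g σ` and the
spherical directional derivative `v·∇_S g (σ)` is `fderiv ℝ g σ (v σ)`, while the
covariant derivative `(v·∇_S)v (σ)` is the tangential projection of `fderiv ℝ v σ (v σ)`. -/
theorem stmt_6 (N : ℕ) (hN : 2 ≤ N)
    (v : EuclideanSpace ℝ (Fin N) → EuclideanSpace ℝ (Fin N))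
    (f p H : EuclideanSpace ℝ (Fin N) → ℝ)
    (hv : ContDiffOn ℝ (⊤ : ℕ∞) v {(0 : EuclideanSpace ℝ (Fin N))}ᶜ)
    (hf : ContDiffOn ℝ (⊤ : ℕ∞) f {(0 : EuclideanSpace ℝ (Fin N))}ᶜ)
    (hp : ContDiffOn ℝ (⊤ : ℕ∞) p {(0 : EuclideanSpace ℝ (Fin N))}ᶜ)
    (hvhom : ∀ t : ℝ, 0 < t → ∀ x : EuclideanSpace ℝ (Fin N), x ≠ 0 → v (t • x) = v x)
    (hfhom : ∀ t : ℝ, 0 < t → ∀ x : EuclideanSpace ℝ (Fin N), x ≠ 0 → f (t • x) = f x)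
    (hphom : ∀ t : ℝ, 0 < t → ∀ x : EuclideanSpace ℝ (Fin N), x ≠ 0 → p (t • x) = p x)
    (htan : ∀ x : EuclideanSpace ℝ (Fin N), x ≠ 0 → ⟪v x, x⟫ = 0)
    (hH : ∀ x : EuclideanSpace ℝ (Fin N), H x = ‖v x‖ ^ 2 + (f x) ^ 2 + 2 * p x)
    (heuler : ∀ σ ∈ sphere (0 : EuclideanSpace ℝ (Fin N)) 1,
      (fderiv ℝ v σ (v σ) - ⟪fderiv ℝ v σ (v σ), σ⟫ • σ) + gradient p σ = 0)
    (hnormal : ∀ σ ∈ sphere (0 : EuclideanSpace ℝ (Fin N)) 1,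
      fderiv ℝ f σ (v σ) = H σ) :
    ∀ σ ∈ sphere (0 : EuclideanSpace ℝ (Fin N)) 1,
      fderiv ℝ H σ (v σ) = 2 * f σ * H σ := by
  intro σ hσ
  have hσ1 : ‖σ‖ = 1 := by simpa using hσ
  have hσ0 : σ ≠ 0 := by
    intro h; rw [h, norm_zero] at hσ1; norm_num at hσ1
  have hmem : {(0 : EuclideanSpace ℝ (Fin N))}ᶜ ∈ nhds σ :=
    isOpen_compl_singleton.mem_nhds hσ0
  have hDv : DifferentiableAt ℝ v σ := (hv.contDiffAt hmem).differentiableAt (by simp)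
  have hDf : DifferentiableAt ℝ f σ := (hf.contDiffAt hmem).differentiableAt (by simp)
  have hDp : DifferentiableAt ℝ p σ := (hp.contDiffAt hmem).differentiableAt (by simp)
  -- H as a function
  have hHfun : H = fun x => ⟪v x, v x⟫ + f x ^ 2 + 2 * p x := by
    funext x
    rw [hH x, real_inner_self_eq_norm_sq]
  have h1 : HasFDerivAt (fun x => ⟪v x, v x⟫)
      ((fderivInnerCLM ℝ (v σ, v σ)).comp ((fderiv ℝ v σ).prod (fderiv ℝ v σ))) σ :=
    hDv.hasFDerivAt.inner ℝ hDv.hasFDerivAt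
  have h2 : HasFDerivAt (fun x => f x ^ 2)
      (f σ • fderiv ℝ f σ + f σ • fderiv ℝ f σ) σ := by
    have := hDf.hasFDerivAt.mul hDf.hasFDerivAt
    simp only [pow_two]; exact this
  have h3 : HasFDerivAt (fun x => 2 * p x) ((2:ℝ) • fderiv ℝ p σ) σ :=
    hDp.hasFDerivAt.const_mul 2
  have hHD : HasFDerivAt H
      (((fderivInnerCLM ℝ (v σ, v σ)).comp ((fderiv ℝ v σ).prod (fderiv ℝ v σ))
        + (f σ • fderiv ℝ f σ + f σ • fderiv ℝ f σ)) + (2:ℝ) • fderiv ℝ p σ) σ := by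
    rw [hHfun]
    exact (h1.add h2).add h3
  have hDH := hHD.fderiv
  rw [hDH]
  -- Euler equation dotted with v σ
  have heq := heuler σ hσ
  have hgradp : ∀ u, ⟪gradient p σ, u⟫ = fderiv ℝ p σ u := fun u =>
    InnerProductSpace.toDual_symm_apply
  have hveq : fderiv ℝ v σ (v σ)
      = ⟪fderiv ℝ v σ (v σ), σ⟫ • σ - gradient p σ := by
    rwa [sub_add, sub_eq_zero] at heq
  have hdot : ⟪v σ, fderiv ℝ v σ (v σ)⟫ + fderiv ℝ p σ (v σ) = 0 := by
    rw [hveq, inner_sub_right, real_inner_smul_right, htan σ hσ0, mul_zero,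
      real_inner_comm, hgradp (v σ)]
    ring
  have hnf := hnormal σ hσ
  simp only [ContinuousLinearMap.add_apply, ContinuousLinearMap.comp_apply,
    ContinuousLinearMap.smul_apply, ContinuousLinearMap.prod_apply, fderivInnerCLM_apply,
    smul_eq_mul, hnf]
  have hcomm : ⟪fderiv ℝ v σ (v σ), v σ⟫ = ⟪v σ, fderiv ℝ v σ (v σ)⟫ := real_inner_comm _ _
  rw [hcomm]
  nlinarith [hdot]
end
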